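/- arXiv:2109.01778 — 3 statements merged into one kernel-verified Lean document; each statement's English description precedes it below -/
import Mathlib

section
/- Let (X, μ) be a measure space and (f_k)_{k∈ℕ} an orthogonal family in L²(X). There exists an absolute constant c > 0 such that the maximal function F*(x) = sup_{N∈ℕ} |∑_{k=0}^N f_k(x)| satisfies ‖F*‖₂² ≤ c ∑_{k=0}^∞ (log(2+k))² ‖f_k‖₂², provided the right-hand side is finite. -/
/-!
Write `Q(a, M)` (`maxBlockNormSq`) for the largest square of an initial partial sum of the block
of `2 ^ M` terms starting at `a`. Then `∫ Q(a, M) ≤ (M + 1) ^ 2 ∑ ‖f k‖ ^ 2` over the block: split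
it into halves and use `(x + y) ^ 2 ≤ (1 + c) x ^ 2 + (1 + c⁻¹) y ^ 2` with `c = M + 1`, which
closes the induction. The only input is `∫ |∑_{k ∈ I} f k| ^ 2 ≤ ∑_{k ∈ I} ‖f k‖ ^ 2` on
intervals `I`.

For the full maximal function cut `ℕ` into the dyadic blocks `[2 ^ q - 1, 2 ^ (q + 1) - 1)`. Every
partial sum consists of complete blocks plus an initial piece of the next block. Cauchy–Schwarz with
the weights `(q + 1)⁻¹` handles the complete blocks and the block maxima handle the rest; both cost
a factor `(q + 1) ^ 2 ≤ 9 log (2 + k) ^ 2` on the `q`-th block.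
-/

open MeasureTheory Finset
open scoped ENNReal NNReal

theorem NNReal.add_sq_le_of_ne_zero (a b : ℝ≥0) {c : ℝ≥0} (hc : c ≠ 0) :
    (a + b) ^ 2 ≤ (1 + c) * a ^ 2 + (1 + c⁻¹) * b ^ 2 := by
  have hcd : (c : ℝ) * (c : ℝ)⁻¹ = 1 := mul_inv_cancel₀ (by exact_mod_cast hc)
  have h : 0 ≤ (c : ℝ) * a ^ 2 - 2 * a * b + (c : ℝ)⁻¹ * b ^ 2 :=
    calc 0 ≤ ((c : ℝ) * a - b) ^ 2 * (c : ℝ)⁻¹ := by positivity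
      _ = _ := by linear_combination ((c : ℝ) * a ^ 2 - 2 * a * b) * hcd
  rw [← NNReal.coe_le_coe]
  push_cast
  linarith

theorem NNReal.sq_sum_range_le (u : ℕ → ℝ≥0) (p : ℕ) :
    (∑ q ∈ range p, u q) ^ 2 ≤ 2 * ∑ q ∈ range p, ((q : ℝ≥0) + 1) ^ 2 * u q ^ 2 := by
  have hweights : ∑ q ∈ range p, ((q : ℝ≥0) + 1)⁻¹ ^ 2 ≤ 2 := by
    have h := sum_Ioo_inv_sq_le (α := ℝ) 0 (p + 1)
    rw [← Ico_add_one_left_eq_Ioo, sum_Ico_eq_sum_range] at h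
    rw [← NNReal.coe_le_coe]
    push_cast
    simpa [inv_pow, add_comm] using h
  calc (∑ q ∈ range p, u q) ^ 2
      = (∑ q ∈ range p, ((q : ℝ≥0) + 1)⁻¹ * (((q : ℝ≥0) + 1) * u q)) ^ 2 := by
        congr 1
        exact sum_congr rfl fun q _ => by rw [inv_mul_cancel_left₀ (by positivity)]
    _ ≤ (∑ q ∈ range p, ((q : ℝ≥0) + 1)⁻¹ ^ 2) * ∑ q ∈ range p, (((q : ℝ≥0) + 1) * u q) ^ 2 :=
        sum_mul_sq_le_sq_mul_sq _ _ _
    _ ≤ 2 * ∑ q ∈ range p, ((q : ℝ≥0) + 1) ^ 2 * u q ^ 2 := by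
        simp_rw [mul_pow]
        gcongr

theorem ENNReal.sq_mul_add_le (c : ℝ≥0) (hc : c ≠ 0) (S₁ S₂ : ℝ≥0∞) :
    (c : ℝ≥0∞) ^ 2 * S₁ + (((1 + c : ℝ≥0) : ℝ≥0∞) * S₁ + ((1 + c⁻¹ : ℝ≥0) : ℝ≥0∞) * (c ^ 2 * S₂)) ≤
      ((c + 1 : ℝ≥0) : ℝ≥0∞) ^ 2 * (S₁ + S₂) := by
  have h₁ : c ^ 2 + (1 + c) ≤ (c + 1) ^ 2 := by
    rw [← NNReal.coe_le_coe]; push_cast; nlinarith [c.coe_nonneg]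
  have h₂ : (1 + c⁻¹) * c ^ 2 ≤ (c + 1) ^ 2 := by
    rw [add_mul, one_mul, sq, inv_mul_cancel_left₀ hc, ← NNReal.coe_le_coe]
    push_cast; nlinarith [c.coe_nonneg]
  calc (c : ℝ≥0∞) ^ 2 * S₁ + (((1 + c : ℝ≥0) : ℝ≥0∞) * S₁ + ((1 + c⁻¹ : ℝ≥0) : ℝ≥0∞) * (c ^ 2 * S₂))
      = ((c ^ 2 + (1 + c) : ℝ≥0) : ℝ≥0∞) * S₁ + (((1 + c⁻¹) * c ^ 2 : ℝ≥0) : ℝ≥0∞) * S₂ := by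
        push_cast; ring
    _ ≤ ((c + 1 : ℝ≥0) : ℝ≥0∞) ^ 2 * (S₁ + S₂) := by
        rw [mul_add, ← ENNReal.coe_pow]
        gcongr

theorem Finset.sum_range_sum_Ico_two_pow_sub_one {M : Type*} [AddCommMonoid M] (f : ℕ → M)
    (p : ℕ) :
    ∑ q ∈ range p, ∑ k ∈ Ico (2 ^ q - 1) (2 ^ q - 1 + 2 ^ q), f k =
      ∑ k ∈ range (2 ^ p - 1), f k := by
  induction p with
  | zero => simp
  | succ p ih =>
    have h : 2 ^ p - 1 + 2 ^ p = 2 ^ (p + 1) - 1 := by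
      have := Nat.one_le_two_pow (n := p); rw [pow_succ]; omega
    rw [sum_range_succ, ih, h, sum_range_add_sum_Ico _ (by rw [← h]; omega)]

theorem sq_add_one_le_nine_mul_log_sq {q k : ℕ} (hk : 2 ^ q ≤ k + 1) :
    ((q : ℝ) + 1) ^ 2 ≤ 9 * Real.log (2 + k) ^ 2 := by
  have hlog2 := Real.log_two_gt_d9
  have hk' : (2 : ℝ) ^ q ≤ 2 + k := by exact_mod_cast hk.trans (by omega)
  have h₁ : Real.log 2 ≤ Real.log (2 + k) :=
    Real.log_le_log two_pos (by linarith [k.cast_nonneg (α := ℝ)])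
  have h₂ : q * Real.log 2 ≤ Real.log (2 + k) := by
    rw [← Real.log_pow]; exact Real.log_le_log (by positivity) hk'
  have h₃ : (q : ℝ) + 1 ≤ 3 * Real.log (2 + k) := by nlinarith [q.cast_nonneg (α := ℝ)]
  nlinarith [q.cast_nonneg (α := ℝ)]

theorem ENNReal.tsum_dyadic_blocks_le_tsum_log_sq (w : ℕ → ℝ≥0∞) :
    ∑' q : ℕ, ((q : ℝ≥0∞) + 1) ^ 2 * ∑ k ∈ Ico (2 ^ q - 1) (2 ^ q - 1 + 2 ^ q), w k ≤
      9 * ∑' k : ℕ, ENNReal.ofReal (Real.log (2 + k) ^ 2) * w k := by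
  set F : ℕ → ℝ≥0∞ := fun k => 9 * ENNReal.ofReal (Real.log (2 + k) ^ 2) * w k
  have hblock (q : ℕ) : ((q : ℝ≥0∞) + 1) ^ 2 * ∑ k ∈ Ico (2 ^ q - 1) (2 ^ q - 1 + 2 ^ q), w k ≤
      ∑ k ∈ Ico (2 ^ q - 1) (2 ^ q - 1 + 2 ^ q), F k := by
    rw [mul_sum]
    refine sum_le_sum fun k hk => mul_le_mul_left ?_ _
    have hq : ((q : ℝ≥0∞) + 1) ^ 2 = ENNReal.ofReal (((q : ℝ) + 1) ^ 2) := by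
      rw [ENNReal.ofReal_pow (by positivity), ENNReal.ofReal_add (by positivity) zero_le_one]
      simp
    rw [hq, ← ENNReal.ofReal_ofNat 9, ← ENNReal.ofReal_mul (by norm_num)]
    rw [mem_Ico] at hk
    exact ENNReal.ofReal_le_ofReal (sq_add_one_le_nine_mul_log_sq (by omega))
  calc _ ≤ ∑' q : ℕ, ∑ k ∈ Ico (2 ^ q - 1) (2 ^ q - 1 + 2 ^ q), F k := ENNReal.tsum_le_tsum hblock
    _ ≤ ∑' k, F k := by
        rw [ENNReal.tsum_eq_iSup_nat]
        exact iSup_le fun P =>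
          (sum_range_sum_Ico_two_pow_sub_one F P).trans_le (ENNReal.sum_le_tsum _)
    _ = _ := by simp_rw [F, mul_assoc, ENNReal.tsum_mul_left]

section Blocks

variable {E : Type*} [SeminormedAddCommGroup E] (v : ℕ → E)

def blockNorm (a n : ℕ) : ℝ≥0 := ‖∑ k ∈ Ico a (a + n), v k‖₊

def maxBlockNormSq (a M : ℕ) : ℝ≥0 :=
  (range (2 ^ M + 1)).sup fun n => blockNorm v a n ^ 2

theorem sq_blockNorm_le_maxBlockNormSq {a n M : ℕ} (h : n ≤ 2 ^ M) :
    blockNorm v a n ^ 2 ≤ maxBlockNormSq v a M :=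
  le_sup (f := fun n => blockNorm v a n ^ 2) (mem_range.2 (by omega))

theorem maxBlockNormSq_zero (a : ℕ) : maxBlockNormSq v a 0 = blockNorm v a 1 ^ 2 := by
  simp [maxBlockNormSq, blockNorm, range_add_one]

theorem blockNorm_add_le (a m n : ℕ) :
    blockNorm v a (m + n) ≤ blockNorm v a m + blockNorm v (a + m) n := by
  unfold blockNorm
  rw [← sum_Ico_consecutive _ (a.le_add_right m) (by omega : a + m ≤ a + (m + n)), ← add_assoc]
  exact nnnorm_add_le _ _

theorem maxBlockNormSq_succ_le (a M : ℕ) {c : ℝ≥0} (hc : c ≠ 0) :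
    maxBlockNormSq v a (M + 1) ≤ maxBlockNormSq v a M +
      ((1 + c) * blockNorm v a (2 ^ M) ^ 2 + (1 + c⁻¹) * maxBlockNormSq v (a + 2 ^ M) M) := by
  refine Finset.sup_le fun n hn => ?_
  rcases le_or_gt n (2 ^ M) with hle | hlt
  · exact le_add_right (sq_blockNorm_le_maxBlockNormSq v hle)
  obtain ⟨m, rfl⟩ := Nat.exists_eq_add_of_le hlt.le
  have hm : m ≤ 2 ^ M := by rw [mem_range, pow_succ] at hn; omega
  calc blockNorm v a (2 ^ M + m) ^ 2
      ≤ (blockNorm v a (2 ^ M) + blockNorm v (a + 2 ^ M) m) ^ 2 := by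
        gcongr; exact blockNorm_add_le v a _ _
    _ ≤ (1 + c) * blockNorm v a (2 ^ M) ^ 2 + (1 + c⁻¹) * blockNorm v (a + 2 ^ M) m ^ 2 :=
        NNReal.add_sq_le_of_ne_zero _ _ hc
    _ ≤ (1 + c) * blockNorm v a (2 ^ M) ^ 2 + (1 + c⁻¹) * maxBlockNormSq v (a + 2 ^ M) M := by
        gcongr; exact sq_blockNorm_le_maxBlockNormSq v hm
    _ ≤ _ := le_add_self

theorem nnnorm_sum_range_sq_le (n : ℕ) :
    ‖∑ k ∈ range n, v k‖₊ ^ 2 ≤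
      4 * ∑ q ∈ range (Nat.log 2 (n + 1)),
          ((q : ℝ≥0) + 1) ^ 2 * blockNorm v (2 ^ q - 1) (2 ^ q) ^ 2 +
        2 * maxBlockNormSq v (2 ^ Nat.log 2 (n + 1) - 1) (Nat.log 2 (n + 1)) := by
  set p := Nat.log 2 (n + 1)
  have hp : 2 ^ p ≤ n + 1 := Nat.pow_log_le_self 2 n.succ_ne_zero
  have hp' : n + 1 < 2 ^ p * 2 := pow_succ 2 p ▸ Nat.lt_pow_succ_log_self one_lt_two _
  have hsplit : ‖∑ k ∈ range n, v k‖₊ ≤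
      ∑ q ∈ range p, blockNorm v (2 ^ q - 1) (2 ^ q) + blockNorm v (2 ^ p - 1) (n + 1 - 2 ^ p) := by
    rw [← sum_range_add_sum_Ico v (by omega : 2 ^ p - 1 ≤ n),
      ← sum_range_sum_Ico_two_pow_sub_one]
    refine (nnnorm_add_le _ _).trans (add_le_add (nnnorm_sum_le _ _) ?_)
    rw [blockNorm, show 2 ^ p - 1 + (n + 1 - 2 ^ p) = n by omega]
  calc ‖∑ k ∈ range n, v k‖₊ ^ 2
      ≤ (∑ q ∈ range p, blockNorm v (2 ^ q - 1) (2 ^ q) +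
          blockNorm v (2 ^ p - 1) (n + 1 - 2 ^ p)) ^ 2 := by gcongr
    _ ≤ 2 * ((∑ q ∈ range p, blockNorm v (2 ^ q - 1) (2 ^ q)) ^ 2 +
          blockNorm v (2 ^ p - 1) (n + 1 - 2 ^ p) ^ 2) := add_sq_le
    _ ≤ 2 * (2 * ∑ q ∈ range p, ((q : ℝ≥0) + 1) ^ 2 * blockNorm v (2 ^ q - 1) (2 ^ q) ^ 2 +
          maxBlockNormSq v (2 ^ p - 1) p) := by
        gcongr
        · exact NNReal.sq_sum_range_le _ p
        · exact sq_blockNorm_le_maxBlockNormSq v (by omega)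
    _ = _ := by ring

theorem iSup_enorm_sum_range_sq_le :
    (⨆ n, ‖∑ k ∈ range n, v k‖ₑ) ^ 2 ≤
      4 * ∑' q : ℕ, ((q : ℝ≥0∞) + 1) ^ 2 * (blockNorm v (2 ^ q - 1) (2 ^ q) : ℝ≥0∞) ^ 2 +
        2 * ∑' p : ℕ, (maxBlockNormSq v (2 ^ p - 1) p : ℝ≥0∞) := by
  rw [ENNReal.iSup_pow]
  refine iSup_le fun n => ?_
  calc ‖∑ k ∈ range n, v k‖ₑ ^ 2
      ≤ 4 * ∑ q ∈ range (Nat.log 2 (n + 1)),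
          ((q : ℝ≥0∞) + 1) ^ 2 * (blockNorm v (2 ^ q - 1) (2 ^ q) : ℝ≥0∞) ^ 2 +
        2 * (maxBlockNormSq v (2 ^ Nat.log 2 (n + 1) - 1) (Nat.log 2 (n + 1)) : ℝ≥0∞) := by
        rw [enorm_eq_nnnorm]; exact_mod_cast nnnorm_sum_range_sq_le v n
    _ ≤ _ := by
        gcongr
        · exact ENNReal.sum_le_tsum _
        · exact ENNReal.le_tsum _

end Blocks

section Maximal

variable {X E : Type*} [MeasurableSpace X] {μ : Measure X} [NormedAddCommGroup E]
  {g : ℕ → X → E} {w : ℕ → ℝ≥0∞}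

theorem aemeasurable_blockNorm (hg : ∀ k, AEStronglyMeasurable (g k) μ) (a n : ℕ) :
    AEMeasurable (fun x => blockNorm (g · x) a n) μ :=
  (Finset.aestronglyMeasurable_fun_sum _ fun k _ => hg k).nnnorm.aemeasurable

theorem aemeasurable_maxBlockNormSq (hg : ∀ k, AEStronglyMeasurable (g k) μ) (a M : ℕ) :
    AEMeasurable (fun x => maxBlockNormSq (g · x) a M) μ := by
  have h : (fun x => maxBlockNormSq (g · x) a M) =
      (range (2 ^ M + 1)).sup fun n x => blockNorm (g · x) a n ^ 2 := by
    ext x; simp [maxBlockNormSq, Finset.sup_apply]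
  rw [h]
  exact Finset.sup_induction (p := fun F => AEMeasurable F μ) aemeasurable_const
    (fun _ h₁ _ h₂ => h₁.sup h₂) fun n _ => (aemeasurable_blockNorm hg a n).pow_const 2

theorem lintegral_maxBlockNormSq_succ_le (hg : ∀ k, AEStronglyMeasurable (g k) μ) (a M : ℕ)
    {c : ℝ≥0} (hc : c ≠ 0) :
    ∫⁻ x, maxBlockNormSq (g · x) a (M + 1) ∂μ ≤ ∫⁻ x, maxBlockNormSq (g · x) a M ∂μ +
      (((1 + c : ℝ≥0) : ℝ≥0∞) * ∫⁻ x, (blockNorm (g · x) a (2 ^ M) : ℝ≥0∞) ^ 2 ∂μ +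
        ((1 + c⁻¹ : ℝ≥0) : ℝ≥0∞) * ∫⁻ x, maxBlockNormSq (g · x) (a + 2 ^ M) M ∂μ) := by
  have hQ := (aemeasurable_maxBlockNormSq hg a M).coe_nnreal_ennreal
  have hQ' := (aemeasurable_maxBlockNormSq hg (a + 2 ^ M) M).coe_nnreal_ennreal
  have hD := (aemeasurable_blockNorm hg a (2 ^ M)).coe_nnreal_ennreal.pow_const 2
  rw [← lintegral_const_mul'' _ hD, ← lintegral_const_mul'' _ hQ',
    ← lintegral_add_left' (hD.const_mul _), ← lintegral_add_left' hQ]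
  exact lintegral_mono fun x => ENNReal.coe_le_coe.2 (maxBlockNormSq_succ_le (g · x) a M hc)

theorem lintegral_maxBlockNormSq_le (hg : ∀ k, AEStronglyMeasurable (g k) μ)
    (hw : ∀ a n, ∫⁻ x, ‖∑ k ∈ Ico a (a + n), g k x‖ₑ ^ 2 ∂μ ≤ ∑ k ∈ Ico a (a + n), w k)
    (M a : ℕ) :
    ∫⁻ x, maxBlockNormSq (g · x) a M ∂μ ≤ ((M : ℝ≥0∞) + 1) ^ 2 * ∑ k ∈ Ico a (a + 2 ^ M), w k := by
  induction M generalizing a with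
  | zero => simpa [maxBlockNormSq_zero, blockNorm, enorm_eq_nnnorm] using hw a 1
  | succ M ih =>
    have hc : (M + 1 : ℝ≥0) ≠ 0 := by positivity
    have hD := hw a (2 ^ M)
    simp only [enorm_eq_nnnorm] at hD
    calc ∫⁻ x, maxBlockNormSq (g · x) a (M + 1) ∂μ
        ≤ _ := lintegral_maxBlockNormSq_succ_le hg a M hc
      _ ≤ ((M + 1 : ℝ≥0) : ℝ≥0∞) ^ 2 * ∑ k ∈ Ico a (a + 2 ^ M), w k +
            (((1 + (M + 1) : ℝ≥0) : ℝ≥0∞) * ∑ k ∈ Ico a (a + 2 ^ M), w k +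
            ((1 + (M + 1 : ℝ≥0)⁻¹ : ℝ≥0) : ℝ≥0∞) *
              (((M + 1 : ℝ≥0) : ℝ≥0∞) ^ 2 * ∑ k ∈ Ico (a + 2 ^ M) (a + 2 ^ M + 2 ^ M), w k)) := by
          gcongr
          · simpa using ih a
          · exact hD
          · simpa using ih (a + 2 ^ M)
      _ ≤ (((M + 1 : ℝ≥0) + 1 : ℝ≥0) : ℝ≥0∞) ^ 2 * ∑ k ∈ Ico a (a + 2 ^ M + 2 ^ M), w k := by
          rw [← sum_Ico_consecutive _ (Nat.le_add_right _ _) (Nat.le_add_right _ _)]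
          exact ENNReal.sq_mul_add_le _ hc _ _
      _ = _ := by
          rw [show a + 2 ^ M + 2 ^ M = a + 2 ^ (M + 1) by rw [pow_succ]; ring]
          push_cast
          ring

theorem lintegral_iSup_enorm_sum_range_sq_le_tsum_dyadic (hg : ∀ k, AEStronglyMeasurable (g k) μ)
    (hw : ∀ a n, ∫⁻ x, ‖∑ k ∈ Ico a (a + n), g k x‖ₑ ^ 2 ∂μ ≤ ∑ k ∈ Ico a (a + n), w k) :
    ∫⁻ x, (⨆ n, ‖∑ k ∈ range n, g k x‖ₑ) ^ 2 ∂μ ≤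
      6 * ∑' q : ℕ, ((q : ℝ≥0∞) + 1) ^ 2 * ∑ k ∈ Ico (2 ^ q - 1) (2 ^ q - 1 + 2 ^ q), w k := by
  set T := ∑' q : ℕ, ((q : ℝ≥0∞) + 1) ^ 2 * ∑ k ∈ Ico (2 ^ q - 1) (2 ^ q - 1 + 2 ^ q), w k
  have hD q := (aemeasurable_blockNorm hg (2 ^ q - 1) (2 ^ q)).coe_nnreal_ennreal.pow_const 2
  have hQ p := (aemeasurable_maxBlockNormSq hg (2 ^ p - 1) p).coe_nnreal_ennreal
  have hT₁ : ∫⁻ x, ∑' q : ℕ, ((q : ℝ≥0∞) + 1) ^ 2 *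
      (blockNorm (g · x) (2 ^ q - 1) (2 ^ q) : ℝ≥0∞) ^ 2 ∂μ ≤ T := by
    rw [lintegral_tsum fun q => (hD q).const_mul _]
    refine ENNReal.tsum_le_tsum fun q => ?_
    rw [lintegral_const_mul'' _ (hD q)]
    gcongr
    simpa [blockNorm, enorm_eq_nnnorm] using hw (2 ^ q - 1) (2 ^ q)
  have hT₂ : ∫⁻ x, ∑' p : ℕ, (maxBlockNormSq (g · x) (2 ^ p - 1) p : ℝ≥0∞) ∂μ ≤ T := by
    rw [lintegral_tsum hQ]
    exact ENNReal.tsum_le_tsum fun p => lintegral_maxBlockNormSq_le hg hw p _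
  calc ∫⁻ x, (⨆ n, ‖∑ k ∈ range n, g k x‖ₑ) ^ 2 ∂μ
      ≤ ∫⁻ x, (4 * ∑' q : ℕ, ((q : ℝ≥0∞) + 1) ^ 2 *
          (blockNorm (g · x) (2 ^ q - 1) (2 ^ q) : ℝ≥0∞) ^ 2 +
          2 * ∑' p : ℕ, (maxBlockNormSq (g · x) (2 ^ p - 1) p : ℝ≥0∞)) ∂μ :=
        lintegral_mono fun x => iSup_enorm_sum_range_sq_le (g · x)
    _ ≤ 4 * T + 2 * T := by
        rw [lintegral_add_left' ((AEMeasurable.tsum fun q => (hD q).const_mul _).const_mul _),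
          lintegral_const_mul' _ _ (by norm_num), lintegral_const_mul' _ _ (by norm_num)]
        gcongr
    _ = 6 * T := by ring

theorem lintegral_iSup_enorm_sum_range_sq_le (hg : ∀ k, AEStronglyMeasurable (g k) μ)
    (hw : ∀ a n, ∫⁻ x, ‖∑ k ∈ Ico a (a + n), g k x‖ₑ ^ 2 ∂μ ≤ ∑ k ∈ Ico a (a + n), w k) :
    ∫⁻ x, (⨆ n, ‖∑ k ∈ range n, g k x‖ₑ) ^ 2 ∂μ ≤
      54 * ∑' k : ℕ, ENNReal.ofReal (Real.log (2 + k) ^ 2) * w k :=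
  calc _ ≤ 6 * _ := lintegral_iSup_enorm_sum_range_sq_le_tsum_dyadic hg hw
    _ ≤ 6 * (9 * _) := by gcongr; exact ENNReal.tsum_dyadic_blocks_le_tsum_log_sq w
    _ = _ := by rw [← mul_assoc]; norm_num

end Maximal

theorem norm_sum_sq_eq_sum_norm_sq_of_pairwise_inner_eq_zero {𝕜 E ι : Type*} [RCLike 𝕜]
    [SeminormedAddCommGroup E] [InnerProductSpace 𝕜 E] {v : ι → E}
    (hv : Pairwise fun i j => inner 𝕜 (v i) (v j) = 0) (s : Finset ι) :
    ‖∑ i ∈ s, v i‖ ^ 2 = ∑ i ∈ s, ‖v i‖ ^ 2 := by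
  classical
  induction s using Finset.induction_on with
  | empty => simp
  | insert a s ha ih =>
    have h : inner 𝕜 (v a) (∑ i ∈ s, v i) = 0 := by
      rw [inner_sum]
      exact sum_eq_zero fun j hj => hv (ne_of_mem_of_not_mem hj ha).symm
    rw [sum_insert ha, sum_insert ha, ← ih, sq, sq, sq,
      norm_add_sq_eq_norm_sq_add_norm_sq_of_inner_eq_zero _ _ h]

namespace MeasureTheory.Lp

variable {X E : Type*} [MeasurableSpace X] {μ : Measure X} [NormedAddCommGroup E]

theorem coeFn_finset_sum {p : ℝ≥0∞} {ι : Type*} (f : ι → Lp E p μ) (s : Finset ι) :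
    ⇑(∑ i ∈ s, f i) =ᵐ[μ] fun x => ∑ i ∈ s, f i x := by
  classical
  induction s using Finset.induction_on with
  | empty => exact Lp.coeFn_zero E p μ
  | insert a s ha ih =>
    simp only [sum_insert ha]
    filter_upwards [Lp.coeFn_add (f a) (∑ i ∈ s, f i), ih] with x hx hx'
    rw [hx, Pi.add_apply, hx']

theorem lintegral_enorm_sq (F : Lp E 2 μ) : ∫⁻ x, ‖F x‖ₑ ^ 2 ∂μ = ‖F‖ₑ ^ 2 := by
  have h := eLpNorm_nnreal_pow_eq_lintegral (f := ⇑F) (μ := μ) (p := 2) two_ne_zero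
  simp only [NNReal.coe_ofNat, ENNReal.coe_ofNat] at h
  rw [Lp.enorm_def, ← ENNReal.rpow_natCast, Nat.cast_ofNat, h]
  simp_rw [← ENNReal.rpow_natCast, Nat.cast_ofNat]

theorem lintegral_enorm_sum_sq_of_pairwise_inner_eq_zero {𝕜 ι : Type*} [RCLike 𝕜]
    [InnerProductSpace 𝕜 E] {f : ι → Lp E 2 μ}
    (hf : Pairwise fun i j => inner 𝕜 (f i) (f j) = 0) (s : Finset ι) :
    ∫⁻ x, ‖∑ i ∈ s, f i x‖ₑ ^ 2 ∂μ = ∑ i ∈ s, ‖f i‖ₑ ^ 2 := by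
  have hsum : ∫⁻ x, ‖∑ i ∈ s, f i x‖ₑ ^ 2 ∂μ = ∫⁻ x, ‖(∑ i ∈ s, f i) x‖ₑ ^ 2 ∂μ :=
    lintegral_congr_ae ((coeFn_finset_sum f s).mono fun x hx => by simp only [hx])
  rw [hsum, lintegral_enorm_sq]
  simp_rw [← ofReal_norm, ← ENNReal.ofReal_pow (norm_nonneg _)]
  rw [norm_sum_sq_eq_sum_norm_sq_of_pairwise_inner_eq_zero hf,
    ENNReal.ofReal_sum_of_nonneg fun i _ => by positivity]

end MeasureTheory.Lp

/-- Rademacher–Menshov theorem, maximal-inequality part: there is an absolute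
constant `c > 0` such that for every orthogonal family `(f_k)` in `L²(X, μ)`
with `∑ (log(2+k))² ‖f_k‖₂² < ∞`, the maximal function
`F*(x) = sup_N |∑_{k=0}^N f_k(x)|` satisfies
`‖F*‖₂² ≤ c ∑ (log(2+k))² ‖f_k‖₂²`. -/
theorem rademacher_menshov_maximal
    {X : Type*} [MeasurableSpace X] (μ : Measure X) :
    ∃ c : ℝ, 0 < c ∧ ∀ f : ℕ → Lp ℂ 2 μ,
      (∀ j k, j ≠ k → (inner ℂ (f j) (f k) : ℂ) = 0) →
      (Summable fun k : ℕ => (Real.log (2 + (k : ℝ))) ^ 2 * ‖f k‖ ^ 2) →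
      ∫⁻ x, (⨆ N : ℕ, (‖∑ k ∈ Finset.range (N + 1), (f k : X → ℂ) x‖₊ : ℝ≥0∞)) ^ 2 ∂μ
        ≤ ENNReal.ofReal (c * ∑' k : ℕ, (Real.log (2 + (k : ℝ))) ^ 2 * ‖f k‖ ^ 2) := by
  refine ⟨54, by norm_num, fun f horth hsumm => ?_⟩
  have hmax := lintegral_iSup_enorm_sum_range_sq_le (μ := μ) (w := fun k => ‖f k‖ₑ ^ 2)
    (fun k => Lp.aestronglyMeasurable (f k))
    fun a n => (Lp.lintegral_enorm_sum_sq_of_pairwise_inner_eq_zero (fun j k => horth j k) _).le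
  calc ∫⁻ x, (⨆ N : ℕ, (‖∑ k ∈ Finset.range (N + 1), (f k : X → ℂ) x‖₊ : ℝ≥0∞)) ^ 2 ∂μ
      ≤ ∫⁻ x, (⨆ n : ℕ, ‖∑ k ∈ Finset.range n, (f k : X → ℂ) x‖ₑ) ^ 2 ∂μ := by
        refine lintegral_mono fun x => pow_le_pow_left₀ zero_le (iSup_le fun N => ?_) 2
        exact le_iSup (fun n => ‖∑ k ∈ Finset.range n, (f k : X → ℂ) x‖ₑ) (N + 1)
    _ ≤ 54 * ∑' k : ℕ, ENNReal.ofReal (Real.log (2 + k) ^ 2) * ‖f k‖ₑ ^ 2 := hmax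
    _ = _ := by
        simp_rw [← ofReal_norm, ← ENNReal.ofReal_pow (norm_nonneg _),
          ← ENNReal.ofReal_mul (sq_nonneg _)]
        rw [← ENNReal.ofReal_tsum_of_nonneg (fun k => by positivity) hsumm,
          ← ENNReal.ofReal_ofNat 54, ← ENNReal.ofReal_mul (by norm_num)]
end

section
/- Let L be a non-negative self-adjoint operator on L²(X) with spectral resolution E_L, and suppose that for every compact set K ⊆ X there exist constants C_K, a > 0 such that ‖F(L) χ_K‖_{2→2} ≤ C_K M^a ‖F(M·)‖_{L²(0,∞)} for all M > 1 and all Borel functions F supported in [M/4, M]. Then the point spectrum of L in (1/4, ∞) is empty, i.e., for every λ > 1/4, the spectral projection E_L({λ}) = 0. -/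
open MeasureTheory Filter Set
open scoped ENNReal Topology symmDiff

/-!
Take `F = χ_{λ}` and `M = 4λ > 1`, so that `F` is supported in `[M/4, M]`. The function
`t ↦ F(Mt)` vanishes off the null set `{1/4}`, so the Plancherel estimate forces
`F(L) f = 0` for every `f` vanishing outside a compact set. On a σ-compact space such `f`
are dense in `L²` (truncate indicators of finite-measure sets along a compact exhaustion),
hence `F(L) = 0`.
-/

namespace MeasureTheory

variable {α E : Type*} [MeasurableSpace α] {μ : Measure α} [NormedAddCommGroup E]
  {p : ℝ≥0∞} [Fact (1 ≤ p)]

theorem tendsto_indicatorConstLp_inter {A : ℕ → Set α} (hA : ∀ n, MeasurableSet (A n))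
    (hA_mono : Monotone A) (hA_cover : ⋃ n, A n = univ) (hp : p ≠ ∞) {s : Set α}
    (hs : MeasurableSet s) (hμs : μ s ≠ ∞) (c : E) :
    Tendsto (fun n ↦ indicatorConstLp p (hs.inter (hA n))
        ((measure_mono inter_subset_left).trans_lt hμs.lt_top).ne c) atTop
      (𝓝 (indicatorConstLp p hs hμs c)) := by
  refine tendsto_indicatorConstLp_set hp ?_
  have h_symmDiff : ∀ n, (s ∩ A n) ∆ s = s \ A n := fun n ↦ by
    rw [symmDiff_of_le inter_subset_left, sdiff_self_inter]
  have h_empty : ⋂ n, s \ A n = ∅ := by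
    rw [← sdiff_iUnion, hA_cover, sdiff_univ]
  simp_rw [h_symmDiff]
  have := tendsto_measure_iInter_atTop (μ := μ)
    (fun n ↦ (hs.diff (hA n)).nullMeasurableSet)
    (fun m n hmn ↦ sdiff_subset_sdiff_right (hA_mono hmn))
    ⟨0, ((measure_mono sdiff_subset).trans_lt hμs.lt_top).ne⟩
  rwa [h_empty, measure_empty] at this

theorem Lp.continuousLinearMap_eq_zero_of_forall_isCompact {X 𝕜 G : Type*}
    [TopologicalSpace X] [T2Space X] [SigmaCompactSpace X] [MeasurableSpace X]
    [OpensMeasurableSpace X] {μ : Measure X}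
    [NontriviallyNormedField 𝕜] [NormedSpace 𝕜 E] [NormedAddCommGroup G] [NormedSpace 𝕜 G]
    (hp : p ≠ ∞) (T : Lp E p μ →L[𝕜] G)
    (hT : ∀ K, IsCompact K → ∀ f : Lp E p μ,
      (∀ᵐ x ∂μ, x ∉ K → f x = 0) → T f = 0) :
    T = 0 := by
  have hA : ∀ n, MeasurableSet (compactCovering X n) :=
    fun n ↦ (isCompact_compactCovering X n).measurableSet
  ext f
  refine Lp.induction hp (fun f : Lp E p μ ↦ T f = 0) (fun c s hs hμs ↦ ?_)
    (fun f g _ _ _ hf hg ↦ by simp [hf, hg])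
    (T.isClosed_ker.preimage continuous_id) f
  rw [Lp.simpleFunc.coe_indicatorConst]
  refine tendsto_nhds_unique ((T.continuous.tendsto _).comp (tendsto_indicatorConstLp_inter
    hA (compactCovering_subset X) (iUnion_compactCovering X) hp hs hμs.ne c)) ?_
  refine tendsto_const_nhds.congr fun n ↦
    (hT _ (isCompact_compactCovering X n) _ ?_).symm
  filter_upwards [indicatorConstLp_coeFn_notMem (E := E)] with x hx hxK
  exact hx fun hxs ↦ hxK hxs.2

end MeasureTheory

theorem indicator_singleton_comp_mul_ae_eq_zero {M : Type*} [Zero M] {c : ℝ} (hc : c ≠ 0)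
    (lam : ℝ) (f : ℝ → M) :
    (fun t ↦ ({lam} : Set ℝ).indicator f (c * t)) =ᵐ[volume] 0 := by
  filter_upwards [compl_mem_ae_iff.mpr (measure_singleton (lam / c))] with t ht
  refine indicator_of_notMem (fun h ↦ ht ?_) f
  rw [mem_singleton_iff, eq_div_iff hc, mul_comm]
  exact h

/-- If the Borel functional calculus `Φ` of a non-negative self-adjoint
operator `L` on `L²(X)` satisfies the Plancherel-type estimate
`‖F(L) χ_K‖_{2→2} ≤ C_K M^a ‖F(M·)‖_{L²}` for all compact `K`, all `M > 1`
and all Borel `F` supported in `[M/4, M]`, then the point spectrum of `L`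
in `(1/4, ∞)` is empty: `E_L({λ}) = Φ(χ_{{λ}}) = 0` for every `λ > 1/4`. -/
theorem no_point_spectrum_of_plancherel
    {X : Type*} [MetricSpace X] [MeasurableSpace X] [BorelSpace X]
    [SigmaCompactSpace X] (μ : Measure X)
    (Φ : (ℝ → ℂ) → (Lp ℂ 2 μ →L[ℂ] Lp ℂ 2 μ))
    (hyp : ∀ K : Set X, IsCompact K → ∃ CK a : ℝ, 0 < CK ∧ 0 < a ∧
      ∀ M : ℝ, 1 < M → ∀ F : ℝ → ℂ, Measurable F →
        Function.support F ⊆ Set.Icc (M / 4) M →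
        ∀ f : Lp ℂ 2 μ, (∀ᵐ x ∂μ, x ∉ K → f x = 0) →
          ‖Φ F f‖ ≤ CK * M ^ a *
            Real.sqrt (∫ t in Set.Ioi (0 : ℝ), ‖F (M * t)‖ ^ 2) * ‖f‖) :
    ∀ lam : ℝ, 1 / 4 < lam → Φ (Set.indicator {lam} 1) = 0 := by
  intro lam hlam
  have hM : 4 * lam ≠ 0 := by positivity
  have h_supp : Function.support (({lam} : Set ℝ).indicator (1 : ℝ → ℂ)) ⊆
      Icc (4 * lam / 4) (4 * lam) :=
    Set.support_indicator_subset.trans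
      (singleton_subset_iff.mpr ⟨by linarith, by linarith⟩)
  have h_integral :
      ∫ t in Ioi (0 : ℝ), ‖({lam} : Set ℝ).indicator (1 : ℝ → ℂ) (4 * lam * t)‖ ^ 2 = 0 := by
    refine integral_eq_zero_of_ae (ae_restrict_of_ae ?_)
    filter_upwards [indicator_singleton_comp_mul_ae_eq_zero hM lam (1 : ℝ → ℂ)]
      with t ht
    simp [ht]
  refine Lp.continuousLinearMap_eq_zero_of_forall_isCompact ENNReal.ofNat_ne_top _
    fun K hK f hf ↦ ?_
  obtain ⟨CK, a, -, -, h_bound⟩ := hyp K hK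
  have := h_bound (4 * lam) (by linarith) _
    (measurable_one.indicator (measurableSet_singleton lam)) h_supp f hf
  rwa [h_integral, Real.sqrt_zero, mul_zero, zero_mul, norm_le_zero_iff] at this
end

section
/- Let L be a non-negative self-adjoint operator on L²(X) with purely discrete spectrum, distinct eigenvalues λ₁ < λ₂ < ⋯ satisfying k ≤ A λ_k^a for large k, and eigenprojections P_k. If f ∈ L²(X) satisfies ‖log(2+L) f‖₂ < ∞, then the partial sums S_R(L)f = ∑_{k: λ_k ≤ R} P_k f converge to f almost everywhere as R → ∞, and ‖sup_{R>0} |S_R(L) f|‖_{L²}² ≤ C ‖log(2+L) f‖₂². -/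
/-!
Rademacher–Menshov: an initial segment of a dyadic block of length `2 ^ m` is a sum of at most
`m + 1` dyadic subblocks, so by Cauchy–Schwarz `|S_n - S_{2^m}|² ≤ (m + 1) Q_m` for
`2 ^ m ≤ n < 2 ^ (m + 1)`, where `Q_m` is the sum of the squared subblock sums; by orthogonality
`∫ Q_m = (m + 1) ∑_{2^m ≤ k < 2^(m+1)} ‖P_k f‖²`. With `V = ∑ (log₂ k + 1)² ‖P_k f‖²` we also
have `‖f - S_{2^m}‖² ≤ V / (m + 1)²`. Hence `|f|² + ∑ₘ |f - S_{2^m}|² + ∑ₘ (m + 1) Q_m`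
dominates `supₙ |S_n|²`, has integral `O(V)`, and is finite a.e., which forces `S_n → f` a.e.
The counting hypothesis gives `log₂ k + 1 ≲ log (2 + λ_k)`, so `V ≲ ‖log (2 + L) f‖²`, and the
spectral sums `S_R(L) f` are the partial sums `S_n` with `n = #{k | λ_k ≤ R}`.
-/

open MeasureTheory Filter Set Finset Topology
open scoped ENNReal Real

section Dyadic

variable {E : Type*} [SeminormedAddCommGroup E]

/-- `dyadicSquareSum v m s` is the sum of `‖∑ k ∈ I, v k‖ ^ 2` over all dyadic subintervals `I`
of `[s, s + 2 ^ m)`. -/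
noncomputable def dyadicSquareSum (v : ℕ → E) : ℕ → ℕ → ℝ
  | 0, s => ‖v s‖ ^ 2
  | m + 1, s => ‖∑ k ∈ Ico s (s + 2 ^ (m + 1)), v k‖ ^ 2
      + dyadicSquareSum v m s + dyadicSquareSum v m (s + 2 ^ m)

theorem dyadicSquareSum_nonneg (v : ℕ → E) (m s : ℕ) : 0 ≤ dyadicSquareSum v m s := by
  induction m generalizing s with
  | zero => exact sq_nonneg _
  | succ m ih => exact add_nonneg (add_nonneg (sq_nonneg _) (ih s)) (ih _)

theorem norm_sum_Ico_sq_le_dyadicSquareSum (v : ℕ → E) (m s : ℕ) :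
    ‖∑ k ∈ Ico s (s + 2 ^ m), v k‖ ^ 2 ≤ dyadicSquareSum v m s := by
  cases m with
  | zero => simp [dyadicSquareSum]
  | succ m =>
    simp only [dyadicSquareSum]
    linarith [dyadicSquareSum_nonneg v m s, dyadicSquareSum_nonneg v m (s + 2 ^ m)]

/-- The Rademacher–Menshov inequality. -/
theorem norm_sum_Ico_sq_le_mul_dyadicSquareSum (v : ℕ → E) {m n : ℕ} (hn : n ≤ 2 ^ m)
    (s : ℕ) : ‖∑ k ∈ Ico s (s + n), v k‖ ^ 2 ≤ (m + 1) * dyadicSquareSum v m s := by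
  induction m generalizing s n with
  | zero =>
    interval_cases n
    · simpa using dyadicSquareSum_nonneg v 0 s
    · simp [dyadicSquareSum]
  | succ m ih =>
    have hQ := dyadicSquareSum_nonneg v m s
    have hQ' := dyadicSquareSum_nonneg v m (s + 2 ^ m)
    have hsucc : dyadicSquareSum v m s + dyadicSquareSum v m (s + 2 ^ m)
        ≤ dyadicSquareSum v (m + 1) s := by
      simp only [dyadicSquareSum]; linarith [sq_nonneg ‖∑ k ∈ Ico s (s + 2 ^ (m + 1)), v k‖]
    push_cast
    rcases le_or_gt n (2 ^ m) with hn' | hn'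
    · nlinarith [ih hn' s]
    · have hx := norm_sum_Ico_sq_le_dyadicSquareSum v m s
      have hy := ih (n := n - 2 ^ m) (by rw [pow_succ] at hn; omega) (s + 2 ^ m)
      have hsplit : ‖∑ k ∈ Ico s (s + n), v k‖ ≤ ‖∑ k ∈ Ico s (s + 2 ^ m), v k‖
          + ‖∑ k ∈ Ico (s + 2 ^ m) (s + 2 ^ m + (n - 2 ^ m)), v k‖ := by
        rw [show s + 2 ^ m + (n - 2 ^ m) = s + n by omega,
          ← sum_Ico_consecutive v (by omega) (by omega : s + 2 ^ m ≤ s + n)]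
        exact norm_add_le _ _
      generalize ‖∑ k ∈ Ico s (s + 2 ^ m), v k‖ = x at hx hsplit
      generalize ‖∑ k ∈ Ico (s + 2 ^ m) (s + 2 ^ m + (n - 2 ^ m)), v k‖ = y at hy hsplit
      have hm : (0 : ℝ) < m + 1 := by positivity
      -- Cauchy–Schwarz with weights `1` and `m + 1`
      have hcs : (x + y) ^ 2 * (m + 1) ≤ (m + 2) * ((m + 1) * x ^ 2 + y ^ 2) := by
        nlinarith [sq_nonneg ((m + 1) * x - y)]
      have hxy : (x + y) ^ 2
          ≤ (m + 2) * (dyadicSquareSum v m s + dyadicSquareSum v m (s + 2 ^ m)) :=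
        le_of_mul_le_mul_right (hcs.trans (by nlinarith [mul_le_mul_of_nonneg_left hx hm.le])) hm
      have hS : ‖∑ k ∈ Ico s (s + n), v k‖ ^ 2 ≤ (x + y) ^ 2 :=
        pow_le_pow_left₀ (norm_nonneg _) hsplit 2
      nlinarith

theorem norm_sum_range_sub_sq_le (v : ℕ → E) (c : E) {n : ℕ} (hn : n ≠ 0) :
    ‖∑ k ∈ range n, v k - c‖ ^ 2 ≤ 2 * ‖∑ k ∈ range (2 ^ Nat.log 2 n), v k - c‖ ^ 2
      + 2 * ((Nat.log 2 n + 1) * dyadicSquareSum v (Nat.log 2 n) (2 ^ Nat.log 2 n)) := by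
  set m := Nat.log 2 n
  have hlo : 2 ^ m ≤ n := Nat.pow_log_le_self 2 hn
  have hhi : n < 2 ^ (m + 1) := Nat.lt_pow_succ_log_self one_lt_two n
  have hsplit : ∑ k ∈ range n, v k - c
      = (∑ k ∈ range (2 ^ m), v k - c) + ∑ k ∈ Ico (2 ^ m) (2 ^ m + (n - 2 ^ m)), v k := by
    rw [show 2 ^ m + (n - 2 ^ m) = n by omega, ← sum_range_add_sum_Ico v hlo]
    abel
  have hblock := norm_sum_Ico_sq_le_mul_dyadicSquareSum v (m := m) (n := n - 2 ^ m)
    (by rw [pow_succ] at hhi; omega) (2 ^ m)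
  have htri := hsplit ▸ norm_add_le (∑ k ∈ range (2 ^ m), v k - c)
    (∑ k ∈ Ico (2 ^ m) (2 ^ m + (n - 2 ^ m)), v k)
  nlinarith [norm_nonneg (∑ k ∈ range n, v k - c),
    sq_nonneg (‖∑ k ∈ range (2 ^ m), v k - c‖ - ‖∑ k ∈ Ico (2 ^ m) (2 ^ m + (n - 2 ^ m)), v k‖)]

theorem ofReal_norm_sum_range_sq_le (v : ℕ → E) (c : E) (n : ℕ) :
    ENNReal.ofReal (‖∑ k ∈ range n, v k‖ ^ 2) ≤ 2 * ENNReal.ofReal (‖c‖ ^ 2)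
      + 4 * (∑' m, ENNReal.ofReal (‖∑ k ∈ range (2 ^ m), v k - c‖ ^ 2))
      + 4 * ∑' m : ℕ, ENNReal.ofReal ((m + 1) * dyadicSquareSum v m (2 ^ m)) := by
  rcases eq_or_ne n 0 with rfl | hn
  · simp
  set m := Nat.log 2 n
  have hc : ‖∑ k ∈ range n, v k‖ ≤ ‖c‖ + ‖∑ k ∈ range n, v k - c‖ := norm_le_insert' _ _
  have hreal : ‖∑ k ∈ range n, v k‖ ^ 2 ≤ 2 * ‖c‖ ^ 2
      + 4 * ‖∑ k ∈ range (2 ^ m), v k - c‖ ^ 2 + 4 * ((m + 1) * dyadicSquareSum v m (2 ^ m)) := by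
    nlinarith [norm_sum_range_sub_sq_le v c hn, norm_nonneg (∑ k ∈ range n, v k),
      sq_nonneg (‖c‖ - ‖∑ k ∈ range n, v k - c‖)]
  have hQ' : 0 ≤ 4 * (((m : ℝ) + 1) * dyadicSquareSum v m (2 ^ m)) :=
    mul_nonneg zero_le_four (mul_nonneg (by positivity) (dyadicSquareSum_nonneg v m _))
  have htail := ENNReal.le_tsum (f := fun m ↦ ENNReal.ofReal (‖∑ k ∈ range (2 ^ m), v k - c‖ ^ 2)) m
  have hblock := ENNReal.le_tsum
    (f := fun m : ℕ ↦ ENNReal.ofReal ((m + 1) * dyadicSquareSum v m (2 ^ m))) m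
  calc ENNReal.ofReal (‖∑ k ∈ range n, v k‖ ^ 2)
      ≤ 2 * ENNReal.ofReal (‖c‖ ^ 2) + 4 * ENNReal.ofReal (‖∑ k ∈ range (2 ^ m), v k - c‖ ^ 2)
        + 4 * ENNReal.ofReal ((m + 1) * dyadicSquareSum v m (2 ^ m)) := by
        refine (ENNReal.ofReal_le_ofReal hreal).trans_eq ?_
        rw [ENNReal.ofReal_add (by positivity) hQ',
          ENNReal.ofReal_add (by positivity) (by positivity), ENNReal.ofReal_mul zero_le_two,
          ENNReal.ofReal_mul zero_le_four, ENNReal.ofReal_mul zero_le_four]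
        norm_num
    _ ≤ _ := by gcongr

theorem tendsto_sum_range_of_tsum_ne_top (v : ℕ → E) (c : E)
    (htail : ∑' m, ENNReal.ofReal (‖∑ k ∈ range (2 ^ m), v k - c‖ ^ 2) ≠ ∞)
    (hblock : ∑' m : ℕ, ENNReal.ofReal ((m + 1) * dyadicSquareSum v m (2 ^ m)) ≠ ∞) :
    Tendsto (fun n ↦ ∑ k ∈ range n, v k) atTop (𝓝 c) := by
  have hlog : Tendsto (Nat.log 2) atTop atTop :=
    tendsto_atTop_atTop.2 fun m ↦ ⟨2 ^ m, fun _ ↦ Nat.le_log_of_pow_le one_lt_two⟩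
  have hzero {a : ℕ → ℝ} (ha : ∀ m, 0 ≤ a m) (h : ∑' m, ENNReal.ofReal (a m) ≠ ∞) :
      Tendsto a atTop (𝓝 0) :=
    ((ENNReal.summable_toReal h).congr fun m ↦ ENNReal.toReal_ofReal (ha m)).tendsto_atTop_zero
  have hbound : Tendsto (fun n ↦ 2 * ‖∑ k ∈ range (2 ^ Nat.log 2 n), v k - c‖ ^ 2
      + 2 * ((Nat.log 2 n + 1) * dyadicSquareSum v (Nat.log 2 n) (2 ^ Nat.log 2 n)))
      atTop (𝓝 0) := by
    have h := (((hzero (fun _ ↦ sq_nonneg _) htail).const_mul 2).add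
      ((hzero (fun m ↦ mul_nonneg (by positivity) (dyadicSquareSum_nonneg v m _))
        hblock).const_mul 2)).comp hlog
    rwa [mul_zero, add_zero] at h
  have hsq : Tendsto (fun n ↦ ‖∑ k ∈ range n, v k - c‖ ^ 2) atTop (𝓝 0) :=
    squeeze_zero' (.of_forall fun _ ↦ sq_nonneg _)
      ((eventually_ne_atTop 0).mono fun n hn ↦ norm_sum_range_sub_sq_le v c hn) hbound
  rw [tendsto_iff_norm_sub_tendsto_zero]
  simpa using hsq.sqrt

theorem sum_range_sum_Ico_two_pow {M : Type*} [AddCommMonoid M] (a : ℕ → M) (n : ℕ) :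
    ∑ m ∈ range n, ∑ k ∈ Ico (2 ^ m) (2 ^ (m + 1)), a k = ∑ k ∈ Ico 1 (2 ^ n), a k := by
  induction n with
  | zero => simp
  | succ n ih =>
    rw [sum_range_succ, ih, sum_Ico_consecutive _ Nat.one_le_two_pow
      (Nat.pow_le_pow_right two_pos n.le_succ)]

end Dyadic

section Orthogonal

variable {𝕜 F : Type*} [RCLike 𝕜] [NormedAddCommGroup F] [InnerProductSpace 𝕜 F]

theorem norm_sum_sq_of_pairwise_inner_eq_zero {ι : Type*} {g : ι → F}
    (hg : Pairwise fun j k ↦ inner 𝕜 (g j) (g k) = 0) (s : Finset ι) :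
    ‖∑ k ∈ s, g k‖ ^ 2 = ∑ k ∈ s, ‖g k‖ ^ 2 := by
  classical
  induction s using Finset.induction_on with
  | empty => simp
  | insert i s hi ih =>
    have horth : inner 𝕜 (g i) (∑ k ∈ s, g k) = 0 :=
      (inner_sum _ _ _).trans (sum_eq_zero fun k hk ↦ hg (ne_of_mem_of_not_mem hk hi).symm)
    rw [sum_insert hi, sum_insert hi, ← ih, sq, sq, sq,
      norm_add_sq_eq_norm_sq_add_norm_sq_of_inner_eq_zero _ _ horth]

theorem hasSum_norm_sq_of_pairwise_inner_eq_zero {g : ℕ → F}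
    (hg : Pairwise fun j k ↦ inner 𝕜 (g j) (g k) = 0) {f : F} (hf : HasSum g f) :
    HasSum (fun k ↦ ‖g k‖ ^ 2) (‖f‖ ^ 2) := by
  rw [hasSum_iff_tendsto_nat_of_nonneg fun _ ↦ sq_nonneg _]
  simpa only [norm_sum_sq_of_pairwise_inner_eq_zero hg] using (hf.tendsto_sum_nat.norm.pow 2)

end Orthogonal

section L2

variable {X : Type*} [MeasurableSpace X] {μ : Measure X}
  {𝕜 E : Type*} [RCLike 𝕜] [NormedAddCommGroup E] [InnerProductSpace 𝕜 E]

theorem lintegral_ofReal_norm_sq (G : Lp E 2 μ) :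
    ∫⁻ x, ENNReal.ofReal (‖G x‖ ^ 2) ∂μ = ENNReal.ofReal (‖G‖ ^ 2) := by
  have h := eLpNorm_nnreal_pow_eq_lintegral (f := G) (μ := μ) (p := 2) two_ne_zero
  simp only [ENNReal.coe_ofNat, NNReal.coe_ofNat, ENNReal.rpow_two] at h
  rw [← Lp.enorm_def] at h
  simp_rw [ENNReal.ofReal_pow (norm_nonneg _), ofReal_norm, h]

variable {g : ℕ → Lp E 2 μ}

theorem lintegral_ofReal_norm_sum_sq (hg : Pairwise fun j k ↦ inner 𝕜 (g j) (g k) = 0)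
    (t : Finset ℕ) :
    ∫⁻ x, ENNReal.ofReal (‖∑ k ∈ t, g k x‖ ^ 2) ∂μ = ENNReal.ofReal (∑ k ∈ t, ‖g k‖ ^ 2) := by
  rw [← norm_sum_sq_of_pairwise_inner_eq_zero hg, ← lintegral_ofReal_norm_sq]
  refine lintegral_congr_ae ?_
  filter_upwards [Lp.coeFn_fun_finsetSum t g] with x hx
  rw [hx]

theorem aestronglyMeasurable_dyadicSquareSum (g : ℕ → Lp E 2 μ) (m s : ℕ) :
    AEStronglyMeasurable (fun x ↦ dyadicSquareSum (g · x) m s) μ := by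
  induction m generalizing s with
  | zero => exact (Lp.aestronglyMeasurable (g s)).norm.pow 2
  | succ m ih =>
    refine (((Finset.aestronglyMeasurable_fun_sum _ fun k _ ↦
      Lp.aestronglyMeasurable (g k)).norm.pow 2).add (ih s)).add (ih _)

theorem aemeasurable_ofReal_mul_dyadicSquareSum (g : ℕ → Lp E 2 μ) (m : ℕ) :
    AEMeasurable (fun x ↦ ENNReal.ofReal ((m + 1) * dyadicSquareSum (g · x) m (2 ^ m))) μ :=
  ((aestronglyMeasurable_dyadicSquareSum g m _).const_mul _).aemeasurable.ennreal_ofReal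

theorem aemeasurable_ofReal_norm_sum_range_sub_sq (g : ℕ → Lp E 2 μ) (f : Lp E 2 μ) (n : ℕ) :
    AEMeasurable (fun x ↦ ENNReal.ofReal (‖∑ k ∈ range n, g k x - f x‖ ^ 2)) μ :=
  (((Finset.aestronglyMeasurable_fun_sum _ fun k _ ↦ Lp.aestronglyMeasurable (g k)).sub
    (Lp.aestronglyMeasurable f)).norm.pow 2).aemeasurable.ennreal_ofReal

theorem lintegral_dyadicSquareSum (hg : Pairwise fun j k ↦ inner 𝕜 (g j) (g k) = 0) (m s : ℕ) :
    ∫⁻ x, ENNReal.ofReal (dyadicSquareSum (g · x) m s) ∂μ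
      = ENNReal.ofReal ((m + 1) * ∑ k ∈ Ico s (s + 2 ^ m), ‖g k‖ ^ 2) := by
  induction m generalizing s with
  | zero => simpa [dyadicSquareSum] using lintegral_ofReal_norm_sq (g s)
  | succ m ih =>
    have hmeas (s : ℕ) := (aestronglyMeasurable_dyadicSquareSum g m s).aemeasurable.ennreal_ofReal
    simp only [dyadicSquareSum]
    simp_rw [ENNReal.ofReal_add (add_nonneg (sq_nonneg _) (dyadicSquareSum_nonneg _ _ _))
      (dyadicSquareSum_nonneg _ _ _),
      ENNReal.ofReal_add (sq_nonneg _) (dyadicSquareSum_nonneg _ _ _)]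
    rw [lintegral_add_right' _ (hmeas _), lintegral_add_right' _ (hmeas _),
      lintegral_ofReal_norm_sum_sq hg, ih, ih, ← ENNReal.ofReal_add, ← ENNReal.ofReal_add,
      show s + 2 ^ (m + 1) = s + 2 ^ m + 2 ^ m by ring,
      ← sum_Ico_consecutive _ (Nat.le_add_right s (2 ^ m)) (Nat.le_add_right _ (2 ^ m))]
    push_cast
    ring_nf
    all_goals positivity

variable {f : Lp E 2 μ} (hg : Pairwise fun j k ↦ inner 𝕜 (g j) (g k) = 0) (hf : HasSum g f)
  (hV : Summable fun k ↦ ((Nat.log 2 k : ℝ) + 1) ^ 2 * ‖g k‖ ^ 2)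
include hg hf hV

theorem norm_sum_range_two_pow_sub_sq_le (m : ℕ) :
    ‖∑ k ∈ range (2 ^ m), g k - f‖ ^ 2
      ≤ (∑' k, ((Nat.log 2 k : ℝ) + 1) ^ 2 * ‖g k‖ ^ 2) / (m + 1) ^ 2 := by
  set w : ℕ → ℝ := fun k ↦ ((Nat.log 2 k : ℝ) + 1) ^ 2 * ‖g k‖ ^ 2
  have hshift : HasSum (fun k ↦ g (k + 2 ^ m)) (f - ∑ k ∈ range (2 ^ m), g k) :=
    (hasSum_nat_add_iff' _).2 hf
  have hpyth := hasSum_norm_sq_of_pairwise_inner_eq_zero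
    (fun j k hjk ↦ hg (by simpa using hjk)) hshift
  have hinj : Function.Injective (· + 2 ^ m) := add_left_injective _
  have hterm (k : ℕ) : ‖g (k + 2 ^ m)‖ ^ 2 ≤ w (k + 2 ^ m) / (m + 1) ^ 2 := by
    have hlog : (m : ℝ) ≤ Nat.log 2 (k + 2 ^ m) :=
      mod_cast Nat.le_log_of_pow_le one_lt_two (Nat.le_add_left _ _)
    rw [le_div_iff₀ (by positivity)]
    exact mul_le_mul_of_nonneg_right (by gcongr) (sq_nonneg _) |>.trans_eq' (mul_comm _ _)
  calc ‖∑ k ∈ range (2 ^ m), g k - f‖ ^ 2 = ∑' k, ‖g (k + 2 ^ m)‖ ^ 2 := by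
        rw [norm_sub_rev, hpyth.tsum_eq]
    _ ≤ ∑' k, w (k + 2 ^ m) / (m + 1) ^ 2 :=
        hpyth.summable.tsum_le_tsum hterm ((hV.comp_injective hinj).div_const _)
    _ = (∑' k, w (k + 2 ^ m)) / (m + 1) ^ 2 := tsum_div_const
    _ ≤ (∑' k, w k) / (m + 1) ^ 2 := by
        gcongr ?_ / _
        exact tsum_comp_le_tsum_of_inj hV (fun _ ↦ by positivity) hinj

omit hf in
theorem lintegral_tsum_dyadicSquareSum_le :
    ∫⁻ x, ∑' m : ℕ, ENNReal.ofReal ((m + 1) * dyadicSquareSum (g · x) m (2 ^ m)) ∂μ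
      ≤ ENNReal.ofReal (∑' k, ((Nat.log 2 k : ℝ) + 1) ^ 2 * ‖g k‖ ^ 2) := by
  have hblock (m : ℕ) : ∫⁻ x, ENNReal.ofReal ((m + 1) * dyadicSquareSum (g · x) m (2 ^ m)) ∂μ
      = ENNReal.ofReal (∑ k ∈ Ico (2 ^ m) (2 ^ (m + 1)),
          ((Nat.log 2 k : ℝ) + 1) ^ 2 * ‖g k‖ ^ 2) := by
    simp_rw [ENNReal.ofReal_mul (by positivity : (0 : ℝ) ≤ m + 1)]
    rw [lintegral_const_mul' _ _ ENNReal.ofReal_ne_top, lintegral_dyadicSquareSum hg,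
      ← ENNReal.ofReal_mul (by positivity), ← mul_assoc, ← sq, mul_sum,
      show 2 ^ m + 2 ^ m = 2 ^ (m + 1) by ring]
    refine congrArg _ (sum_congr rfl fun k hk ↦ ?_)
    rw [Nat.log_eq_of_pow_le_of_lt_pow (mem_Ico.1 hk).1 (mem_Ico.1 hk).2]
  rw [lintegral_tsum (aemeasurable_ofReal_mul_dyadicSquareSum g)]
  refine ENNReal.tsum_le_of_sum_range_le fun n ↦ ?_
  simp_rw [hblock]
  rw [← ENNReal.ofReal_sum_of_nonneg fun _ _ ↦ sum_nonneg fun _ _ ↦ by positivity,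
    sum_range_sum_Ico_two_pow]
  exact ENNReal.ofReal_le_ofReal (hV.sum_le_tsum _ fun _ _ ↦ by positivity)

theorem lintegral_tsum_norm_sum_range_two_pow_sub_sq_le :
    ∫⁻ x, ∑' m, ENNReal.ofReal (‖∑ k ∈ range (2 ^ m), g k x - f x‖ ^ 2) ∂μ
      ≤ ENNReal.ofReal (π ^ 2 / 6 * ∑' k, ((Nat.log 2 k : ℝ) + 1) ^ 2 * ‖g k‖ ^ 2) := by
  have hzeta : HasSum (fun m : ℕ ↦ 1 / ((m : ℝ) + 1) ^ 2) (π ^ 2 / 6) := by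
    simpa using (hasSum_nat_add_iff' 1).2 hasSum_zeta_two
  have hterm (m : ℕ) : ∫⁻ x, ENNReal.ofReal (‖∑ k ∈ range (2 ^ m), g k x - f x‖ ^ 2) ∂μ
      = ENNReal.ofReal (‖∑ k ∈ range (2 ^ m), g k - f‖ ^ 2) := by
    rw [← lintegral_ofReal_norm_sq]
    refine lintegral_congr_ae ?_
    filter_upwards [Lp.coeFn_sub (∑ k ∈ range (2 ^ m), g k) f,
      Lp.coeFn_fun_finsetSum (range (2 ^ m)) g] with x hsub hsum
    rw [hsub, Pi.sub_apply, hsum]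
  set V := ∑' k, ((Nat.log 2 k : ℝ) + 1) ^ 2 * ‖g k‖ ^ 2
  rw [lintegral_tsum fun m ↦ aemeasurable_ofReal_norm_sum_range_sub_sq g f (2 ^ m),
    tsum_congr hterm, mul_comm, ← (hzeta.mul_left V).tsum_eq,
    ENNReal.ofReal_tsum_of_nonneg (fun _ ↦ by positivity) (hzeta.mul_left V).summable]
  refine ENNReal.tsum_le_tsum fun m ↦ ENNReal.ofReal_le_ofReal ?_
  exact (norm_sum_range_two_pow_sub_sq_le hg hf hV m).trans_eq (mul_one_div _ _).symm

theorem norm_sq_le_tsum_log_sq_mul_norm_sq :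
    ‖f‖ ^ 2 ≤ ∑' k, ((Nat.log 2 k : ℝ) + 1) ^ 2 * ‖g k‖ ^ 2 := by
  have hpyth := hasSum_norm_sq_of_pairwise_inner_eq_zero hg hf
  rw [← hpyth.tsum_eq]
  refine hpyth.summable.tsum_le_tsum (fun k ↦ le_mul_of_one_le_left (sq_nonneg _) ?_) hV
  exact one_le_pow₀ (le_add_of_nonneg_left (Nat.cast_nonneg _))

theorem ae_tendsto_sum_range_of_pairwise_inner_eq_zero :
    ∀ᵐ x ∂μ, Tendsto (fun n ↦ ∑ k ∈ range n, g k x) atTop (𝓝 (f x)) := by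
  have htail := ae_lt_top'
    (AEMeasurable.tsum fun m ↦ aemeasurable_ofReal_norm_sum_range_sub_sq g f (2 ^ m))
    ((lintegral_tsum_norm_sum_range_two_pow_sub_sq_le hg hf hV).trans_lt ENNReal.ofReal_lt_top).ne
  have hblock := ae_lt_top' (AEMeasurable.tsum fun m ↦ aemeasurable_ofReal_mul_dyadicSquareSum g m)
    ((lintegral_tsum_dyadicSquareSum_le hg hV).trans_lt ENNReal.ofReal_lt_top).ne
  filter_upwards [htail, hblock] with x htail hblock
  exact tendsto_sum_range_of_tsum_ne_top _ _ htail.ne hblock.ne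

theorem lintegral_iSup_norm_sum_range_sq_le :
    ∫⁻ x, (⨆ n, ‖∑ k ∈ range n, g k x‖ₑ) ^ 2 ∂μ
      ≤ ENNReal.ofReal ((6 + 2 * π ^ 2 / 3) * ∑' k, ((Nat.log 2 k : ℝ) + 1) ^ 2 * ‖g k‖ ^ 2) := by
  set V := ∑' k, ((Nat.log 2 k : ℝ) + 1) ^ 2 * ‖g k‖ ^ 2
  have hV0 : 0 ≤ V := tsum_nonneg fun _ ↦ by positivity
  calc ∫⁻ x, (⨆ n, ‖∑ k ∈ range n, g k x‖ₑ) ^ 2 ∂μ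
      ≤ ∫⁻ x, 2 * ENNReal.ofReal (‖f x‖ ^ 2)
          + 4 * (∑' m, ENNReal.ofReal (‖∑ k ∈ range (2 ^ m), g k x - f x‖ ^ 2))
          + 4 * ∑' m : ℕ, ENNReal.ofReal ((m + 1) * dyadicSquareSum (g · x) m (2 ^ m)) ∂μ := by
        refine lintegral_mono fun x ↦ ?_
        rw [ENNReal.iSup_pow]
        refine iSup_le fun n ↦ ?_
        rw [← ofReal_norm, ← ENNReal.ofReal_pow (norm_nonneg _)]
        exact ofReal_norm_sum_range_sq_le _ _ n
    _ = 2 * ∫⁻ x, ENNReal.ofReal (‖f x‖ ^ 2) ∂μ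
          + 4 * ∫⁻ x, ∑' m, ENNReal.ofReal (‖∑ k ∈ range (2 ^ m), g k x - f x‖ ^ 2) ∂μ
          + 4 * ∫⁻ x, ∑' m : ℕ,
              ENNReal.ofReal ((m + 1) * dyadicSquareSum (g · x) m (2 ^ m)) ∂μ := by
        have hf2 : AEMeasurable (fun x ↦ ENNReal.ofReal (‖f x‖ ^ 2)) μ :=
          ((Lp.aestronglyMeasurable f).norm.pow 2).aemeasurable.ennreal_ofReal
        have htail : AEMeasurable (fun x ↦
            ∑' m, ENNReal.ofReal (‖∑ k ∈ range (2 ^ m), g k x - f x‖ ^ 2)) μ :=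
          .tsum fun m ↦ aemeasurable_ofReal_norm_sum_range_sub_sq g f (2 ^ m)
        rw [lintegral_add_left' ((hf2.const_mul 2).fun_add (htail.const_mul 4)),
          lintegral_add_left' (hf2.const_mul 2), lintegral_const_mul' _ _ ENNReal.ofNat_ne_top,
          lintegral_const_mul' _ _ ENNReal.ofNat_ne_top,
          lintegral_const_mul' _ _ ENNReal.ofNat_ne_top]
    _ ≤ 2 * ENNReal.ofReal V + 4 * ENNReal.ofReal (π ^ 2 / 6 * V) + 4 * ENNReal.ofReal V := by
        rw [lintegral_ofReal_norm_sq]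
        gcongr
        · exact norm_sq_le_tsum_log_sq_mul_norm_sq hg hf hV
        · exact lintegral_tsum_norm_sum_range_two_pow_sub_sq_le hg hf hV
        · exact lintegral_tsum_dyadicSquareSum_le hg hV
    _ = ENNReal.ofReal ((6 + 2 * π ^ 2 / 3) * V) := by
        rw [show (6 + 2 * π ^ 2 / 3) * V = 2 * V + 4 * (π ^ 2 / 6 * V) + 4 * V by ring,
          ENNReal.ofReal_add (by positivity) (by positivity),
          ENNReal.ofReal_add (by positivity) (by positivity), ENNReal.ofReal_mul zero_le_two,
          ENNReal.ofReal_mul zero_le_four, ENNReal.ofReal_mul zero_le_four]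
        norm_num

end L2

theorem exists_two_mul_add_one_le_mul_rpow {A a : ℝ} (hA : 0 < A) (ha : 0 ≤ a) {lam : ℕ → ℝ}
    (hnonneg : ∀ k, 0 ≤ lam k) (hcount : ∃ K : ℕ, ∀ k : ℕ, K ≤ k → (k : ℝ) ≤ A * lam k ^ a) :
    ∃ B : ℝ, 1 ≤ B ∧ ∀ k : ℕ, 2 * ((k : ℝ) + 1) ≤ B * (2 + lam k) ^ a := by
  obtain ⟨K, hK⟩ := hcount
  refine ⟨4 * A + 2 * K + 2, by linarith [(K.cast_nonneg : (0 : ℝ) ≤ K)], fun k ↦ ?_⟩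
  have hpow : 1 ≤ (2 + lam k) ^ a := Real.one_le_rpow (by linarith [hnonneg k]) ha
  by_cases hk : K ≤ k ∧ 1 ≤ k
  · have hk1 : (1 : ℝ) ≤ k := mod_cast hk.2
    have hmono : lam k ^ a ≤ (2 + lam k) ^ a :=
      Real.rpow_le_rpow (hnonneg k) (by linarith) ha
    nlinarith [hK k hk.1, mul_le_mul_of_nonneg_left hmono hA.le]
  · have hkK : (k : ℝ) + 1 ≤ K + 1 := by
      have : k + 1 ≤ K + 1 := by omega
      exact_mod_cast this
    nlinarith

theorem exists_log_two_add_one_le_mul_log {a B : ℝ} (ha : 0 < a) (hB1 : 1 ≤ B) {lam : ℕ → ℝ}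
    (hnonneg : ∀ k, 0 ≤ lam k) (hB : ∀ k : ℕ, 2 * ((k : ℝ) + 1) ≤ B * (2 + lam k) ^ a) :
    ∃ D : ℝ, 0 < D ∧ ∀ k : ℕ, (Nat.log 2 k : ℝ) + 1 ≤ D * Real.log (2 + lam k) := by
  have hlog2 : 0 < Real.log 2 := Real.log_pos one_lt_two
  refine ⟨(Real.log B / Real.log 2 + a) / Real.log 2,
    div_pos (add_pos_of_nonneg_of_pos (div_nonneg (Real.log_nonneg hB1) hlog2.le) ha) hlog2,
    fun k ↦ ?_⟩
  have hlam : 0 < 2 + lam k := by linarith [hnonneg k]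
  have hpow : (2 : ℝ) ^ (Nat.log 2 k + 1) ≤ 2 * ((k : ℝ) + 1) := by
    rw [pow_succ, mul_comm]
    exact mul_le_mul_of_nonneg_left (mod_cast Nat.pow_log_le_add_one 2 k) zero_le_two
  have hlogk : ((Nat.log 2 k : ℝ) + 1) * Real.log 2 ≤ Real.log B + a * Real.log (2 + lam k) :=
    calc ((Nat.log 2 k : ℝ) + 1) * Real.log 2 = Real.log ((2 : ℝ) ^ (Nat.log 2 k + 1)) := by
          rw [Real.log_pow]; push_cast; ring
      _ ≤ Real.log (B * (2 + lam k) ^ a) :=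
          Real.log_le_log (by positivity) (hpow.trans (hB k))
      _ = Real.log B + a * Real.log (2 + lam k) := by
          rw [Real.log_mul (by positivity) (Real.rpow_pos_of_pos hlam a).ne',
            Real.log_rpow hlam]
  have hB' : Real.log B ≤ Real.log B / Real.log 2 * Real.log (2 + lam k) := by
    rw [div_mul_eq_mul_div, le_div_iff₀ hlog2]
    exact mul_le_mul_of_nonneg_left (Real.log_le_log two_pos (by linarith [hnonneg k]))
      (Real.log_nonneg hB1)
  rw [div_mul_eq_mul_div, le_div_iff₀ hlog2]
  linarith

theorem tendsto_atTop_of_two_mul_add_one_le_mul_rpow {a B : ℝ} (ha : 0 ≤ a) {lam : ℕ → ℝ}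
    (hmono : Monotone lam) (hnonneg : ∀ k, 0 ≤ lam k)
    (hB : ∀ k : ℕ, 2 * ((k : ℝ) + 1) ≤ B * (2 + lam k) ^ a) :
    Tendsto lam atTop atTop := by
  refine hmono.tendsto_atTop_atTop fun R ↦ ?_
  by_contra! hR
  obtain ⟨k, hk⟩ := exists_nat_gt (B * (2 + R) ^ a)
  have hB0 : 0 ≤ B := by
    nlinarith [hB 0, Real.rpow_nonneg (by linarith [hnonneg 0] : 0 ≤ 2 + lam 0) a]
  have hk' : (2 + lam k) ^ a ≤ (2 + R) ^ a :=
    Real.rpow_le_rpow (by linarith [hnonneg k]) (by linarith [hR k]) ha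
  have := (hB k).trans (mul_le_mul_of_nonneg_left hk' hB0)
  linarith

theorem Monotone.exists_le_iff_lt_of_tendsto_atTop {lam : ℕ → ℝ} (hmono : Monotone lam)
    (htop : Tendsto lam atTop atTop) :
    ∃ N : ℝ → ℕ, (∀ R k, lam k ≤ R ↔ k < N R) ∧ Tendsto N atTop atTop := by
  classical
  have hex (R : ℝ) : ∃ k, R < lam k := (htop.eventually_gt_atTop R).exists
  have hN (R : ℝ) (k : ℕ) : lam k ≤ R ↔ k < Nat.find (hex R) := by
    rw [Nat.lt_find_iff]
    exact ⟨fun hk m hm ↦ not_lt.2 ((hmono hm).trans hk), fun h ↦ not_lt.1 (h k le_rfl)⟩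
  exact ⟨fun R ↦ Nat.find (hex R), hN,
    Filter.tendsto_atTop_atTop.2 fun n ↦ ⟨lam n, fun R hR ↦ ((hN R n).1 hR).le⟩⟩

theorem tsum_ite_eq_sum_range {M : Type*} [AddCommMonoid M] [TopologicalSpace M]
    {p : ℕ → Prop} [DecidablePred p] {N : ℕ} (hN : ∀ k, p k ↔ k < N) (v : ℕ → M) :
    ∑' k, (if p k then v k else 0) = ∑ k ∈ range N, v k := by
  rw [tsum_eq_sum (s := range N) fun k hk ↦ if_neg (by rwa [hN, ← Finset.mem_range])]
  exact sum_congr rfl fun k hk ↦ if_pos ((hN k).2 (Finset.mem_range.1 hk))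

theorem ae_convergence_discrete_spectrum_general
    {X : Type*} [MeasurableSpace X] (μ : Measure X)
    (A a : ℝ) (hA : 0 < A) (ha : 0 < a)
    (lam : ℕ → ℝ) (hmono : StrictMono lam) (hnonneg : ∀ k, 0 ≤ lam k)
    (hcount : ∃ K : ℕ, ∀ k : ℕ, K ≤ k → (k : ℝ) ≤ A * lam k ^ a)
    (P : ℕ → Lp ℂ 2 μ →L[ℂ] Lp ℂ 2 μ)
    (horth : ∀ j k, j ≠ k → ∀ g g' : Lp ℂ 2 μ, (inner ℂ (P j g) (P k g') : ℂ) = 0)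
    (hcomplete : ∀ g : Lp ℂ 2 μ, HasSum (fun k => P k g) g)
    (f : Lp ℂ 2 μ)
    (hlog : Summable fun k : ℕ => (Real.log (2 + lam k)) ^ 2 * ‖P k f‖ ^ 2) :
    (∀ᵐ x ∂μ,
      Tendsto (fun R : ℝ => ∑' k : ℕ, if lam k ≤ R then (P k f : X → ℂ) x else 0)
        atTop (nhds (f x))) ∧
    ∃ C : ℝ, 0 < C ∧
      ∫⁻ x, (⨆ R : ℝ, ⨆ (_ : 0 < R),
          (‖∑' k : ℕ, if lam k ≤ R then (P k f : X → ℂ) x else 0‖₊ : ℝ≥0∞)) ^ 2 ∂μ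
        ≤ ENNReal.ofReal (C * ∑' k : ℕ, (Real.log (2 + lam k)) ^ 2 * ‖P k f‖ ^ 2) := by
  obtain ⟨B, hB1, hB⟩ := exists_two_mul_add_one_le_mul_rpow hA ha.le hnonneg hcount
  obtain ⟨D, hD, hlogD⟩ := exists_log_two_add_one_le_mul_log ha hB1 hnonneg hB
  obtain ⟨N, hN, hNtop⟩ := hmono.monotone.exists_le_iff_lt_of_tendsto_atTop
    (tendsto_atTop_of_two_mul_add_one_le_mul_rpow ha.le hmono.monotone hnonneg hB)
  have hg : Pairwise fun j k ↦ inner ℂ (P j f) (P k f) = 0 := fun j k hjk ↦ horth j k hjk f f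
  have hweight (k : ℕ) : ((Nat.log 2 k : ℝ) + 1) ^ 2 * ‖P k f‖ ^ 2
      ≤ D ^ 2 * (Real.log (2 + lam k) ^ 2 * ‖P k f‖ ^ 2) := by
    rw [← mul_assoc, ← mul_pow D]
    gcongr
    exact hlogD k
  have hV : Summable fun k ↦ ((Nat.log 2 k : ℝ) + 1) ^ 2 * ‖P k f‖ ^ 2 :=
    (hlog.mul_left _).of_nonneg_of_le (fun _ ↦ by positivity) hweight
  have hS (x : X) (R : ℝ) : (∑' k, if lam k ≤ R then (P k f : X → ℂ) x else 0)
      = ∑ k ∈ range (N R), (P k f : X → ℂ) x :=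
    tsum_ite_eq_sum_range (hN R) _
  refine ⟨?_, (6 + 2 * π ^ 2 / 3) * D ^ 2, by positivity, ?_⟩
  · filter_upwards [ae_tendsto_sum_range_of_pairwise_inner_eq_zero hg (hcomplete f) hV] with x hx
    simp_rw [hS]
    exact hx.comp hNtop
  calc ∫⁻ x, (⨆ R : ℝ, ⨆ (_ : 0 < R),
          (‖∑' k : ℕ, if lam k ≤ R then (P k f : X → ℂ) x else 0‖₊ : ℝ≥0∞)) ^ 2 ∂μ
      ≤ ∫⁻ x, (⨆ n, ‖∑ k ∈ range n, (P k f : X → ℂ) x‖ₑ) ^ 2 ∂μ := by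
        refine lintegral_mono fun x ↦ pow_le_pow_left' (iSup₂_le fun R _ ↦ ?_) 2
        rw [hS, ← enorm_eq_nnnorm]
        exact le_iSup (fun n ↦ ‖∑ k ∈ range n, (P k f : X → ℂ) x‖ₑ) (N R)
    _ ≤ ENNReal.ofReal ((6 + 2 * π ^ 2 / 3) * ∑' k, ((Nat.log 2 k : ℝ) + 1) ^ 2 * ‖P k f‖ ^ 2) :=
        lintegral_iSup_norm_sum_range_sq_le hg (hcomplete f) hV
    _ ≤ _ := by
        rw [mul_assoc]
        gcongr
        exact (hV.tsum_le_tsum hweight (hlog.mul_left _)).trans_eq tsum_mul_left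

/-- Theorem 1.2: for a non-negative self-adjoint operator on `L²(X)` with
purely discrete spectrum, distinct eigenvalues `λ₁ < λ₂ < ⋯` satisfying
`k ≤ A λ_k^a` for large `k`, and eigenprojections `P_k`, if
`‖log(2+L)f‖₂² = ∑ (log(2+λ_k))² ‖P_k f‖₂² < ∞` then the spherical partial
sums `S_R(L)f = ∑_{λ_k ≤ R} P_k f` converge to `f` a.e. as `R → ∞`, with
maximal inequality `‖sup_R |S_R(L)f|‖₂² ≤ C ‖log(2+L)f‖₂²`. -/
theorem ae_convergence_discrete_spectrum
    {X : Type*} [MeasurableSpace X] (μ : Measure X)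
    (A a : ℝ) (hA : 0 < A) (ha : 0 < a)
    (lam : ℕ → ℝ) (hmono : StrictMono lam) (hnonneg : ∀ k, 0 ≤ lam k)
    (hcount : ∃ K : ℕ, ∀ k : ℕ, K ≤ k → (k : ℝ) ≤ A * lam k ^ a)
    (P : ℕ → Lp ℂ 2 μ →L[ℂ] Lp ℂ 2 μ)
    (horth : ∀ j k, j ≠ k → ∀ g g' : Lp ℂ 2 μ, (inner ℂ (P j g) (P k g') : ℂ) = 0)
    (hproj : ∀ k, ∀ g : Lp ℂ 2 μ, P k (P k g) = P k g)
    (hcomplete : ∀ g : Lp ℂ 2 μ, HasSum (fun k => P k g) g)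
    (f : Lp ℂ 2 μ)
    (hlog : Summable fun k : ℕ => (Real.log (2 + lam k)) ^ 2 * ‖P k f‖ ^ 2) :
    (∀ᵐ x ∂μ,
      Tendsto (fun R : ℝ => ∑' k : ℕ, if lam k ≤ R then (P k f : X → ℂ) x else 0)
        atTop (nhds (f x))) ∧
    ∃ C : ℝ, 0 < C ∧
      ∫⁻ x, (⨆ R : ℝ, ⨆ (_ : 0 < R),
          (‖∑' k : ℕ, if lam k ≤ R then (P k f : X → ℂ) x else 0‖₊ : ℝ≥0∞)) ^ 2 ∂μ
        ≤ ENNReal.ofReal (C * ∑' k : ℕ, (Real.log (2 + lam k)) ^ 2 * ‖P k f‖ ^ 2) :=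
  ae_convergence_discrete_spectrum_general μ A a hA ha lam hmono hnonneg hcount P horth hcomplete f
    hlog
end
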